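/- The composite NSA iterates satisfy lim_{k→∞} k²·(F(x_k) − F*) = 0. -/

import Mathlib

open scoped RealInnerProductSpace
open Filter Finset

/-!
With `v k = F (x k) - F*`, the step to `x'_{k+1}` is a proximal gradient step from `y k`;
comparing it with `u = (1 - α k) x k + α k x*` and using convexity gives
`v (k+1) ≤ (1 - α k) v k + L α_k² / 2 (‖z k - x*‖² - ‖z (k+1) - x*‖²)`, while the safeguard
step `x''_{k+1}` makes `v` non-increasing. For `p ≥ 3` the energy
`(k + p - 1)² v k + L p² / 2 ‖z k - x*‖²` then drops by at least `k v k` per step, so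
`∑ k v k < ∞`, and for a non-increasing `v` this forces `k² v k → 0`.
-/

section Smooth

variable {E : Type*} [NormedAddCommGroup E] [InnerProductSpace ℝ E] [CompleteSpace E] {f : E → ℝ}

lemma DifferentiableAt.hasDerivAt_comp_add_smul {a v : E} {t : ℝ}
    (hf : DifferentiableAt ℝ f (a + t • v)) :
    HasDerivAt (fun s : ℝ => f (a + s • v)) ⟪gradient f (a + t • v), v⟫ t := by
  have hline : HasDerivAt (fun s : ℝ => a + s • v) v t := by
    simpa using ((hasDerivAt_id t).smul_const v).const_add a
  have := hf.hasGradientAt.hasFDerivAt.comp_hasDerivAt t hline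
  rwa [InnerProductSpace.toDual_apply_apply] at this

lemma ConvexOn.add_inner_gradient_le (hconv : ConvexOn ℝ Set.univ f) {a : E}
    (hf : DifferentiableAt ℝ f a) (u : E) : f a + ⟪gradient f a, u - a⟫ ≤ f u := by
  have hline : ConvexOn ℝ Set.univ (fun s : ℝ => f (a + s • (u - a))) := by
    simpa [Function.comp_def, AffineMap.lineMap_apply, add_comm] using
      hconv.comp_affineMap (AffineMap.lineMap a u : ℝ →ᵃ[ℝ] E)
  have hderiv := DifferentiableAt.hasDerivAt_comp_add_smul (v := u - a) (t := 0)
    (by rwa [zero_smul, add_zero])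
  have := hline.le_slope_of_hasDerivAt (Set.mem_univ 0) (Set.mem_univ 1) one_pos hderiv
  rw [slope_def_field] at this
  simp only [zero_smul, add_zero, one_smul, add_sub_cancel, sub_zero, div_one] at this
  linarith

lemma le_add_inner_gradient_add_sq_of_lipschitz (hf : Differentiable ℝ f) {L : ℝ}
    (hlip : ∀ x x' : E, ‖gradient f x - gradient f x'‖ ≤ L * ‖x - x'‖) (a b : E) :
    f b ≤ f a + ⟪gradient f a, b - a⟫ + L / 2 * ‖b - a‖ ^ 2 := by
  set v := b - a
  set ψ : ℝ → ℝ := fun t => f (a + t • v) - t * ⟪gradient f a, v⟫ - L / 2 * t ^ 2 * ‖v‖ ^ 2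
  have hψ : ∀ t : ℝ, HasDerivAt ψ
      (⟪gradient f (a + t • v), v⟫ - ⟪gradient f a, v⟫ - L * t * ‖v‖ ^ 2) t := by
    intro t
    have := (((hf (a + t • v)).hasDerivAt_comp_add_smul).sub
      ((hasDerivAt_id t).mul_const ⟪gradient f a, v⟫)).sub
      (((hasDerivAt_pow 2 t).const_mul (L / 2)).mul_const (‖v‖ ^ 2))
    refine this.congr_deriv ?_
    simp only [Nat.cast_ofNat, one_mul, Nat.add_one_sub_one, pow_one]
    ring
  have hanti : AntitoneOn ψ (Set.Icc 0 1) := by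
    refine antitoneOn_of_deriv_nonpos (convex_Icc 0 1)
      (fun t _ => (hψ t).continuousAt.continuousWithinAt)
      (fun t _ => (hψ t).differentiableAt.differentiableWithinAt) fun t ht => ?_
    rw [interior_Icc] at ht
    have hcs : ⟪gradient f (a + t • v) - gradient f a, v⟫ ≤ L * t * ‖v‖ ^ 2 :=
      calc ⟪gradient f (a + t • v) - gradient f a, v⟫
          ≤ ‖gradient f (a + t • v) - gradient f a‖ * ‖v‖ := real_inner_le_norm _ _
        _ ≤ L * ‖(a + t • v) - a‖ * ‖v‖ := by gcongr; exact hlip _ _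
        _ = L * t * ‖v‖ ^ 2 := by
          rw [add_sub_cancel_left, norm_smul, Real.norm_of_nonneg ht.1.le]; ring
    rw [(hψ t).deriv]
    rw [inner_sub_left] at hcs
    linarith
  have := hanti (Set.left_mem_Icc.2 zero_le_one) (Set.right_mem_Icc.2 zero_le_one) zero_le_one
  simp only [ψ, v, zero_smul, add_zero, one_smul, add_sub_cancel] at this
  linarith

variable {L : ℝ}

lemma add_le_of_proxGrad_step (hconvf : ConvexOn ℝ Set.univ f) (hf : Differentiable ℝ f)
    (hL : 0 < L) (hlip : ∀ x x' : E, ‖gradient f x - gradient f x'‖ ≤ L * ‖x - x'‖)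
    {g : E → ℝ} {a s x : E} (hx : x = a - (1 / L) • gradient f a - (1 / L) • s)
    (hs : ∀ u, g x + ⟪s, u - x⟫ ≤ g u) (u : E) :
    f x + g x ≤ f u + g u + L / 2 * ‖a - u‖ ^ 2 - L / 2 * ‖x - u‖ ^ 2 := by
  have hstep : gradient f a + s = L • (a - x) := by
    rw [hx, sub_sub, sub_sub_cancel, ← smul_add, smul_smul, mul_one_div_cancel hL.ne', one_smul]
  have hinner : ⟪gradient f a, x - a⟫ - ⟪gradient f a, u - a⟫ - ⟪s, u - x⟫
      = L * ⟪a - x, x - u⟫ :=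
    calc _ = ⟪gradient f a + s, x - u⟫ := by
          simp only [inner_add_left, inner_sub_right]; ring
      _ = L * ⟪a - x, x - u⟫ := by rw [hstep, real_inner_smul_left]
  have hnorm : ‖a - u‖ ^ 2 = ‖x - a‖ ^ 2 + 2 * ⟪a - x, x - u⟫ + ‖x - u‖ ^ 2 := by
    rw [← sub_add_sub_cancel a x u, norm_add_sq_real, norm_sub_rev x a]
  have hdescent := le_add_inner_gradient_add_sq_of_lipschitz hf hlip a x
  have hconv := hconvf.add_inner_gradient_le (hf a) u
  have hsub := hs u
  rw [hnorm]
  linarith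

lemma add_le_self_of_proxGrad_step (hconvf : ConvexOn ℝ Set.univ f) (hf : Differentiable ℝ f)
    (hL : 0 < L) (hlip : ∀ x x' : E, ‖gradient f x - gradient f x'‖ ≤ L * ‖x - x'‖)
    {g : E → ℝ} {a s x : E} (hx : x = a - (1 / L) • gradient f a - (1 / L) • s)
    (hs : ∀ u, g x + ⟪s, u - x⟫ ≤ g u) : f x + g x ≤ f a + g a := by
  have := add_le_of_proxGrad_step hconvf hf hL hlip hx hs a
  rw [sub_self, norm_zero] at this
  nlinarith [sq_nonneg ‖x - a‖]

lemma sub_le_of_accelerated_step (hconvf : ConvexOn ℝ Set.univ f) (hf : Differentiable ℝ f)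
    (hL : 0 < L) (hlip : ∀ x x' : E, ‖gradient f x - gradient f x'‖ ≤ L * ‖x - x'‖)
    {g : E → ℝ} (hconvg : ConvexOn ℝ Set.univ g) {α : ℝ} (hα0 : 0 < α) (hα1 : α ≤ 1)
    {xs x z y x' s z' : E} (hy : y = (1 - α) • x + α • z)
    (hx' : x' = y - (1 / L) • gradient f y - (1 / L) • s)
    (hs : ∀ u, g x' + ⟪s, u - x'⟫ ≤ g u) (hz' : z' = z - (1 / L / α) • (gradient f y + s)) :
    f x' + g x' - (f xs + g xs) ≤ (1 - α) * (f x + g x - (f xs + g xs))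
      + L * α ^ 2 / 2 * (‖z - xs‖ ^ 2 - ‖z' - xs‖ ^ 2) := by
  set u := (1 - α) • x + α • xs
  have hconv : f u + g u ≤ (1 - α) * (f x + g x) + α * (f xs + g xs) := by
    have hfu := hconvf.2 (Set.mem_univ x) (Set.mem_univ xs) (sub_nonneg.2 hα1) hα0.le
      (sub_add_cancel 1 α)
    have hgu := hconvg.2 (Set.mem_univ x) (Set.mem_univ xs) (sub_nonneg.2 hα1) hα0.le
      (sub_add_cancel 1 α)
    simp only [smul_eq_mul] at hfu hgu
    linarith
  have hy_u : y - u = α • (z - xs) := by rw [hy]; module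
  have hx'_u : x' - u = α • (z' - xs) := by
    have hscale : α • ((1 / L / α) • (gradient f y + s)) = (1 / L) • (gradient f y + s) := by
      rw [smul_smul, mul_div_cancel₀ _ hα0.ne']
    rw [hz', smul_sub, smul_sub, hscale, hx', hy]
    module
  have hstep := add_le_of_proxGrad_step hconvf hf hL hlip hx' hs u
  rw [hy_u, hx'_u, norm_smul, norm_smul, Real.norm_of_nonneg hα0.le] at hstep
  linarith

end Smooth

lemma summable_of_add_le_of_nonneg {a e : ℕ → ℝ} (ha : ∀ k, 0 ≤ a k) (he : ∀ k, 0 ≤ e k)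
    (hdec : ∀ k, e (k + 1) + a k ≤ e k) : Summable a := by
  have hbound : ∀ N, e N + ∑ k ∈ range N, a k ≤ e 0 := by
    intro N
    induction N with
    | zero => simp
    | succ N ih => rw [sum_range_succ]; linarith [hdec N]
  exact summable_of_sum_range_le ha fun N => by linarith [hbound N, he N]

lemma summable_mul_of_accelerated_recursion {p c : ℝ} (hp : 3 ≤ p) (hc : 0 ≤ c)
    {v W : ℕ → ℝ} (hv : ∀ k, 0 ≤ v k) (hW : ∀ k, 0 ≤ W k)
    (hrec : ∀ k : ℕ, v (k + 1) ≤ (1 - p / (k + p)) * v k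
      + c * (p / (k + p)) ^ 2 * (W k - W (k + 1))) :
    Summable fun k : ℕ => (k : ℝ) * v k := by
  refine summable_of_add_le_of_nonneg
    (e := fun k => ((k : ℝ) + p - 1) ^ 2 * v k + c * p ^ 2 * W k)
    (fun k => mul_nonneg k.cast_nonneg (hv k)) (fun k => by positivity [hv k, hW k]) fun k => ?_
  have hq : (0 : ℝ) < k + p := by positivity
  have hscaled : ((k : ℝ) + p) ^ 2 * v (k + 1)
      ≤ k * (k + p) * v k + c * p ^ 2 * (W k - W (k + 1)) := by
    have hfirst : ((k : ℝ) + p) ^ 2 * (1 - p / (k + p)) = k * (k + p) := by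
      field_simp; ring
    have hsecond : ((k : ℝ) + p) ^ 2 * (p / (k + p)) ^ 2 = p ^ 2 := by field_simp
    calc ((k : ℝ) + p) ^ 2 * v (k + 1)
        ≤ ((k : ℝ) + p) ^ 2 * ((1 - p / (k + p)) * v k
          + c * (p / (k + p)) ^ 2 * (W k - W (k + 1))) := by gcongr; exact hrec k
      _ = k * (k + p) * v k + c * p ^ 2 * (W k - W (k + 1)) := by
          linear_combination v k * hfirst + c * (W k - W (k + 1)) * hsecond
  -- `(k + p - 1)² = k (k + p) + k + k (p - 3) + (p - 1)²`: this is where `p ≥ 3` enters.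
  have hcoef : (k : ℝ) * (k + p) * v k + k * v k ≤ ((k : ℝ) + p - 1) ^ 2 * v k := by
    nlinarith [mul_nonneg (mul_nonneg k.cast_nonneg (sub_nonneg.2 hp)) (hv k),
      mul_nonneg (sq_nonneg (p - 1)) (hv k)]
  push_cast
  linarith

lemma tendsto_sq_mul_of_antitone_of_summable {v : ℕ → ℝ} (hv : ∀ k, 0 ≤ v k) (hanti : Antitone v)
    (hsum : Summable fun k : ℕ => (k : ℝ) * v k) :
    Tendsto (fun k : ℕ => (k : ℝ) ^ 2 * v k) atTop (nhds 0) := by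
  set tail : ℕ → ℝ := fun m => ∑' j : ℕ, ((j : ℝ) + m) * v (j + m)
  have htail : Tendsto (fun k => 9 * tail (k / 2)) atTop (nhds 0) := by
    simpa [tail] using ((tendsto_sum_nat_add fun k : ℕ => (k : ℝ) * v k).comp
      (Nat.tendsto_div_const_atTop two_ne_zero)).const_mul 9
  refine squeeze_zero' (Eventually.of_forall fun k => mul_nonneg (sq_nonneg _) (hv k))
    (eventually_atTop.2 ⟨2, fun k hk => ?_⟩) htail
  set m := k / 2
  -- The `k - m ≥ m` terms with indices in `[m, k)` are each at least `m * v k`.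
  have hblock : (m : ℝ) ^ 2 * v k ≤ tail m := by
    calc (m : ℝ) ^ 2 * v k ≤ ((k - m : ℕ) : ℝ) * ((m : ℝ) * v k) := by
          rw [sq, mul_assoc]
          gcongr
          · exact mul_nonneg m.cast_nonneg (hv k)
          · exact_mod_cast (by omega : m ≤ k - m)
      _ = ∑ j ∈ range (k - m), (m : ℝ) * v k := by rw [sum_const, card_range, nsmul_eq_mul]
      _ ≤ ∑ j ∈ range (k - m), ((j : ℝ) + m) * v (j + m) := by
          refine sum_le_sum fun j hj => ?_
          rw [mem_range] at hj
          gcongr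
          · exact hv _
          · exact le_add_of_nonneg_left j.cast_nonneg
          · exact hanti (by omega)
      _ ≤ tail m := by
          refine Summable.sum_le_tsum _ (fun j _ => mul_nonneg (by positivity) (hv _)) ?_
          simpa using (summable_nat_add_iff m).2 hsum
  have hk : (k : ℝ) ^ 2 ≤ 9 * (m : ℝ) ^ 2 := by
    have : (k : ℝ) ≤ 3 * m := by exact_mod_cast (by omega : k ≤ 3 * m)
    nlinarith [k.cast_nonneg (α := ℝ)]
  nlinarith [hv k]

theorem nsa_stmt_17_general (n : ℕ)
    (f : EuclideanSpace ℝ (Fin n) → ℝ)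
    (hconvf : ConvexOn ℝ Set.univ f)
    (hdiff : Differentiable ℝ f)
    (L : ℝ) (hL : 0 < L)
    (hlip : ∀ x x' : EuclideanSpace ℝ (Fin n),
      ‖gradient f x - gradient f x'‖ ≤ L * ‖x - x'‖)
    (h : EuclideanSpace ℝ (Fin n) → ℝ)
    (hconvh : ConvexOn ℝ Set.univ h)
    (xstar : EuclideanSpace ℝ (Fin n))
    (hmin : ∀ u, f xstar + h xstar ≤ f u + h u)
    (p : ℝ) (hp : 3 ≤ p)
    (η : ℝ) (hη : η = 1 / L)
    (α : ℕ → ℝ) (hα : ∀ k : ℕ, α k = p / (k + p))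
    (x y z xp xpp gp gpp : ℕ → EuclideanSpace ℝ (Fin n))
    (hy : ∀ k, y k = (1 - α k) • x k + α k • z k)
    (hxp : ∀ k, xp k = y k - η • gradient f (y k) - η • gp k)
    (hgp : ∀ k, ∀ u, h (xp k) + ⟪gp k, u - xp k⟫ ≤ h u)
    (hxpp : ∀ k, xpp k = x k - η • gradient f (x k) - η • gpp k)
    (hgpp : ∀ k, ∀ u, h (xpp k) + ⟪gpp k, u - xpp k⟫ ≤ h u)
    (hx : ∀ k, x (k + 1) =
      if f (xp k) + h (xp k) ≤ f (xpp k) + h (xpp k) then xp k else xpp k)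
    (hz : ∀ k, z (k + 1) = z k - (η / α k) • (gradient f (y k) + gp k)) :
    Filter.Tendsto
      (fun k : ℕ => (k : ℝ) ^ 2 * (f (x k) + h (x k) - (f xstar + h xstar)))
      Filter.atTop (nhds 0) := by
  subst hη
  set v : ℕ → ℝ := fun k => f (x k) + h (x k) - (f xstar + h xstar)
  have hv : ∀ k, 0 ≤ v k := fun k => sub_nonneg.2 (hmin (x k))
  have hselect : ∀ k, f (x (k + 1)) + h (x (k + 1)) ≤ f (xp k) + h (xp k) ∧
      f (x (k + 1)) + h (x (k + 1)) ≤ f (xpp k) + h (xpp k) := by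
    intro k
    rw [hx k]
    split_ifs with hle <;> constructor <;> linarith
  have hanti : Antitone v := antitone_nat_of_succ_le fun k => by
    have := add_le_self_of_proxGrad_step hconvf hdiff hL hlip (hxpp k) (hgpp k)
    linarith [(hselect k).2]
  have hα0 : ∀ k, 0 < α k := fun k => by rw [hα k]; positivity
  have hα1 : ∀ k, α k ≤ 1 := fun k => by
    rw [hα k, div_le_one (by positivity)]; linarith [k.cast_nonneg (α := ℝ)]
  have hrec : ∀ k : ℕ, v (k + 1) ≤ (1 - p / (k + p)) * v k
      + L / 2 * (p / (k + p)) ^ 2 * (‖z k - xstar‖ ^ 2 - ‖z (k + 1) - xstar‖ ^ 2) := by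
    intro k
    have := sub_le_of_accelerated_step hconvf hdiff hL hlip hconvh (hα0 k) (hα1 k) (xs := xstar)
      (hy k) (hxp k) (hgp k) (hz k)
    rw [← hα k]
    linarith [(hselect k).1]
  exact tendsto_sq_mul_of_antitone_of_summable hv hanti
    (summable_mul_of_accelerated_recursion hp (by positivity) hv (fun k => sq_nonneg _) hrec)

/-- The composite NSA iterates satisfy `k² (F(x_k) - F*) → 0`, where
`F = f + h` with `f` smooth convex and `h` convex. -/
theorem nsa_stmt_17 (n : ℕ) (hn : 1 ≤ n)
    (f : EuclideanSpace ℝ (Fin n) → ℝ)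
    (hconvf : ConvexOn ℝ Set.univ f)
    (hdiff : Differentiable ℝ f)
    (L : ℝ) (hL : 0 < L)
    (hlip : ∀ x x' : EuclideanSpace ℝ (Fin n),
      ‖gradient f x - gradient f x'‖ ≤ L * ‖x - x'‖)
    (h : EuclideanSpace ℝ (Fin n) → ℝ)
    (hconvh : ConvexOn ℝ Set.univ h)
    (xstar : EuclideanSpace ℝ (Fin n))
    (hmin : ∀ u, f xstar + h xstar ≤ f u + h u)
    (p : ℝ) (hp : 3 ≤ p)
    (η : ℝ) (hη : η = 1 / L)
    (α : ℕ → ℝ) (hα : ∀ k : ℕ, α k = p / (k + p))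
    (x y z xp xpp gp gpp : ℕ → EuclideanSpace ℝ (Fin n))
    (hx0 : x 0 = z 0)
    (hy : ∀ k, y k = (1 - α k) • x k + α k • z k)
    (hxp : ∀ k, xp k = y k - η • gradient f (y k) - η • gp k)
    (hgp : ∀ k, ∀ u, h (xp k) + ⟪gp k, u - xp k⟫ ≤ h u)
    (hxpp : ∀ k, xpp k = x k - η • gradient f (x k) - η • gpp k)
    (hgpp : ∀ k, ∀ u, h (xpp k) + ⟪gpp k, u - xpp k⟫ ≤ h u)
    (hx : ∀ k, x (k + 1) =
      if f (xp k) + h (xp k) ≤ f (xpp k) + h (xpp k) then xp k else xpp k)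
    (hz : ∀ k, z (k + 1) = z k - (η / α k) • (gradient f (y k) + gp k)) :
    Filter.Tendsto
      (fun k : ℕ => (k : ℝ) ^ 2 * (f (x k) + h (x k) - (f xstar + h xstar)))
      Filter.atTop (nhds 0) :=
  nsa_stmt_17_general n f hconvf hdiff L hL hlip h hconvh xstar hmin p hp η hη α hα x y z xp xpp gp
    gpp hy hxp hgp hxpp hgpp hx hz
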